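/- If G is a global amoeba of order n with minimum degree 1, then G has at most ⌊n²/4⌋ edges, and its clique number and chromatic number are both at most ⌊n/2⌋ + 1. Moreover, if e(G) = ⌊n²/4⌋, then ω(G) = χ(G) = ⌊n/2⌋ + 1. -/

import Mathlib

open SimpleGraph Equiv

/-- The labeled copy `G_σ`, with edges `v_{σ⁻¹ i} v_{σ⁻¹ j}` for edges `v_i v_j` of `G`. -/
def copyG {V : Type*} (G : SimpleGraph V) (σ : Equiv.Perm V) : SimpleGraph V where
  Adj a b := G.Adj (σ a) (σ b)
  symm := ⟨fun _ _ h => h.symm⟩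
  loopless := ⟨fun _ h => G.irrefl h⟩

/-- The graph `G - v_r v_s + v_k v_l`. -/
def replaceG {V : Type*} (G : SimpleGraph V) (r s k l : V) : SimpleGraph V :=
  SimpleGraph.fromEdgeSet ((G.edgeSet \ {s(r, s)}) ∪ {s(k, l)})

/-- The edge-replacement `rs → kl` is feasible: `v_r v_s ∈ E(G)`, `v_k v_l` is a non-edge or
`{k,l} = {r,s}`, and `G - v_r v_s + v_k v_l ≅ G`. -/
def IsFeasible {V : Type*} (G : SimpleGraph V) (r s k l : V) : Prop :=
  G.Adj r s ∧ (Gᶜ.Adj k l ∨ s(k, l) = s(r, s)) ∧ Nonempty (replaceG G r s k l ≃g G)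

/-- The permutations realizing feasible edge-replacements of `G`. -/
def feasiblePerms {V : Type*} (G : SimpleGraph V) : Set (Equiv.Perm V) :=
  {σ | ∃ r s k l, IsFeasible G r s k l ∧ copyG G σ = replaceG G r s k l}

/-- The group `S_G` generated by all permutations realizing feasible edge-replacements. -/
def ampGroup {V : Type*} (G : SimpleGraph V) : Subgroup (Equiv.Perm V) :=
  Subgroup.closure (feasiblePerms G)

/-- `G` is a local amoeba if `S_G` is the full symmetric group. -/
def LocalAmoeba {V : Type*} (G : SimpleGraph V) : Prop := ampGroup G = ⊤

/-- Disjoint union of two graphs. -/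
def sumGraph {V W : Type*} (H : SimpleGraph V) (H' : SimpleGraph W) : SimpleGraph (V ⊕ W) :=
  SimpleGraph.map Sum.inl H ⊔ SimpleGraph.map Sum.inr H'

/-- `G` together with `t` additional isolated vertices. -/
def addIsolated {V : Type*} (G : SimpleGraph V) (t : ℕ) : SimpleGraph (V ⊕ Fin t) :=
  sumGraph G (⊥ : SimpleGraph (Fin t))

/-- `G` is a global amoeba if `G ∪ tK₁` is a local amoeba for all sufficiently large `t`. -/
def GlobalAmoeba {V : Type*} (G : SimpleGraph V) : Prop :=
  ∃ T : ℕ, ∀ t ≥ T, LocalAmoeba (addIsolated G t)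

/-!
A feasible edge-replacement changes every degree by at most one, so a permutation realizing it
preserves the set of vertices of degree `< g` whenever no vertex has degree exactly `g`. Since
`S_{G ∪ tK₁}` contains the transposition of an added isolated vertex with any vertex of `G`,
the degrees of `G` leave no gap in `{1, …, Δ}`. Consequently at most `n + 1 - m` vertices have
degree `≥ m`; a vertex of minimum degree in any vertex set then has at most `⌊n/2⌋` neighbours
there, and greedy colouring gives `ω ≤ χ ≤ ⌊n/2⌋ + 1`.

For the edges let `S` be the `k` vertices of largest degree, `k` being the side of the Durfee
square of the degree sequence. Then `2e ≤ k(k-1) + 2 ∑_{u ∉ S} deg u`, and outside `S` the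
degrees are at most `k` and include `1, …, k-1`, whence `e ≤ k(n-k) ≤ ⌊n²/4⌋`. If
`e = ⌊n²/4⌋` every step is tight: `S` is a clique, each vertex outside `S` has all its
neighbours in `S`, and `k ≥ ⌊n/2⌋`; when `k = ⌊n/2⌋` some vertex outside `S` has degree `k`,
hence is adjacent to all of `S` and extends it to a clique of size `⌊n/2⌋ + 1`.
-/

open Finset Pointwise

lemma Nat.mul_sub_le_sq_div_four (k n : ℕ) : k * (n - k) ≤ n ^ 2 / 4 := by
  rw [Nat.le_div_iff_mul_le four_pos]
  rcases le_total k n with hkn | hnk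
  · obtain ⟨j, rfl⟩ := Nat.exists_eq_add_of_le hkn
    rw [Nat.add_sub_cancel_left]
    nlinarith [sq_nonneg ((k : ℤ) - j)]
  · simp [Nat.sub_eq_zero_of_le hnk]

lemma Nat.le_two_mul_add_one_of_mul_sub_eq {k n : ℕ} (h : k * (n - k) = n ^ 2 / 4) :
    n ≤ 2 * k + 1 := by
  by_contra! hlt
  obtain ⟨j, rfl⟩ := Nat.exists_eq_add_of_le (by omega : k ≤ n)
  rw [Nat.add_sub_cancel_left] at h
  have : (k * j + 1) * 4 ≤ (k + j) ^ 2 := by nlinarith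
  rw [← Nat.le_div_iff_mul_le four_pos, ← h] at this
  omega

lemma exists_durfee_finset {ι : Type*} [Fintype ι] (f : ι → ℕ) :
    ∃ S : Finset ι, (∀ i ∈ S, #S ≤ f i) ∧ ∀ i ∉ S, f i ≤ #S := by
  have hex : ∃ k, #{i | k < f i} ≤ k := ⟨Fintype.card ι, card_le_univ _⟩
  obtain ⟨k, hk_spec, hk_le⟩ : ∃ k, #{i | k < f i} ≤ k ∧ k ≤ #{i | k ≤ f i} := by
    refine ⟨Nat.find hex, Nat.find_spec hex, ?_⟩
    rcases Nat.eq_zero_or_pos (Nat.find hex) with hk | hk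
    · omega
    have hmin := Nat.find_min hex (Nat.sub_one_lt hk.ne')
    have heq : #{i | Nat.find hex - 1 < f i} = #{i | Nat.find hex ≤ f i} := by
      congr 1; exact filter_congr fun i _ => by omega
    omega
  obtain ⟨S, hsub, hsup, hcard⟩ := exists_subsuperset_card_eq
    (by intro i; simp only [mem_filter, mem_univ, true_and]; omega) hk_spec hk_le
  refine ⟨S, fun i hi => ?_, fun i hi => ?_⟩
  · simpa [hcard] using hsup hi
  · by_contra! h
    exact hi (hsub (by simpa [hcard] using h))

section Amoeba

variable {X : Type*}

lemma ncard_neighborSet_copyG [Finite X] (H : SimpleGraph X) (σ : Perm X) (x : X) :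
    ((copyG H σ).neighborSet x).ncard = (H.neighborSet (σ x)).ncard :=
  Set.ncard_preimage_of_injective_subset_range (s := H.neighborSet (σ x)) σ.injective
    (by simp)

lemma ncard_neighborSet_replaceG_le [Finite X] (H : SimpleGraph X) (r s k l x : X) :
    ((replaceG H r s k l).neighborSet x).ncard ≤ (H.neighborSet x).ncard + 1 := by
  classical
  have hsub : (replaceG H r s k l).neighborSet x ⊆
      insert (if x = k then l else k) (H.neighborSet x) := by
    intro y hy
    simp only [replaceG, mem_neighborSet, fromEdgeSet_adj, Set.mem_union, Set.mem_sdiff,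
      mem_edgeSet, Set.mem_singleton_iff, Sym2.eq_iff] at hy
    simp only [Set.mem_insert_iff, mem_neighborSet]
    grind
  exact (Set.ncard_le_ncard hsub).trans (Set.ncard_insert_le _ _)

lemma LocalAmoeba.ncard_neighborSet_lt_iff [Finite X] {H : SimpleGraph X} (hH : LocalAmoeba H)
    {g : ℕ} (hg : ∀ x, (H.neighborSet x).ncard ≠ g) (x y : X) :
    (H.neighborSet x).ncard < g ↔ (H.neighborSet y).ncard < g := by
  classical
  set A : Set X := {x | (H.neighborSet x).ncard < g}
  have hfeasible : feasiblePerms H ⊆ MulAction.stabilizer (Perm X) A := by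
    rintro σ ⟨r, s, k, l, -, hσ⟩
    refine Set.eq_of_subset_of_ncard_le ?_ (Set.ncard_smul_set σ A).ge (Set.toFinite A)
    rintro _ ⟨z, hz, rfl⟩
    have hle := ncard_neighborSet_replaceG_le H r s k l z
    rw [← hσ, ncard_neighborSet_copyG] at hle
    have := hg (σ z)
    simp only [A, Set.mem_ofPred_eq, Perm.smul_def] at hz ⊢
    omega
  have hswap : swap x y • A = A := by
    have : ampGroup H ≤ MulAction.stabilizer (Perm X) A := (Subgroup.closure_le _).2 hfeasible
    exact this (hH ▸ Subgroup.mem_top _)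
  have hy : y ∈ swap x y • A ↔ y ∈ A := by rw [hswap]
  simpa [A, Set.mem_smul_set_iff_inv_smul_mem, swap_inv] using hy

end Amoeba

section Degrees

variable {V : Type*}

lemma ncard_neighborSet_addIsolated_inl [Fintype V] (G : SimpleGraph V) [DecidableRel G.Adj]
    (t : ℕ) (v : V) : ((addIsolated G t).neighborSet (Sum.inl v)).ncard = G.degree v := by
  have hN : (addIsolated G t).neighborSet (Sum.inl v) = Sum.inl '' G.neighborSet v := by
    ext (w | i) <;> simp +contextual [addIsolated, sumGraph, map_adj', G.ne_of_adj]
  rw [hN, Set.ncard_image_of_injective _ Sum.inl_injective, Set.ncard_eq_toFinset_card',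
    ← neighborFinset_def, card_neighborFinset_eq_degree]

lemma neighborSet_addIsolated_inr (G : SimpleGraph V) (t : ℕ) (i : Fin t) :
    (addIsolated G t).neighborSet (Sum.inr i) = ∅ := by
  ext (w | j) <;> simp [addIsolated, sumGraph, map_adj']

def GaplessDegrees [Fintype V] (G : SimpleGraph V) [DecidableRel G.Adj] : Prop :=
  ∀ ⦃g : ℕ⦄, 1 ≤ g → ∀ ⦃v : V⦄, g ≤ G.degree v → ∃ w, G.degree w = g

theorem GlobalAmoeba.gaplessDegrees [Fintype V] {G : SimpleGraph V} [DecidableRel G.Adj]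
    (hG : GlobalAmoeba G) : GaplessDegrees G := by
  intro g hg v hv
  by_contra! hmissing
  obtain ⟨T, hT⟩ := hG
  have hne : ∀ x, ((addIsolated G (T + 1)).neighborSet x).ncard ≠ g := by
    rintro (w | i)
    · rw [ncard_neighborSet_addIsolated_inl]; exact hmissing w
    · rw [neighborSet_addIsolated_inr, Set.ncard_empty]; omega
  have hiff := (hT (T + 1) T.le_succ).ncard_neighborSet_lt_iff hne (Sum.inr 0) (Sum.inl v)
  rw [neighborSet_addIsolated_inr, Set.ncard_empty, ncard_neighborSet_addIsolated_inl] at hiff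
  have := hmissing v
  omega

end Degrees

section Graph

variable {V : Type*} [Fintype V] [DecidableEq V] {G : SimpleGraph V} [DecidableRel G.Adj]

lemma card_neighborFinset_inter_lt {s : Finset V} {v : V} (hv : v ∈ s) :
    #(G.neighborFinset v ∩ s) < #s :=
  card_lt_card ⟨inter_subset_right,
    fun h => G.notMem_neighborFinset_self v (inter_subset_left (h hv))⟩

lemma card_neighborFinset_inter_le_degree (s : Finset V) (v : V) :
    #(G.neighborFinset v ∩ s) ≤ G.degree v :=
  (card_le_card inter_subset_left).trans_eq (card_neighborFinset_eq_degree G v)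

lemma isClique_of_forall_card_le_card_neighborFinset_inter_add_one {s : Finset V}
    (h : ∀ v ∈ s, #s ≤ #(G.neighborFinset v ∩ s) + 1) : G.IsClique (s : Set V) := by
  intro a ha b hb hab
  have hsub : G.neighborFinset a ∩ s ⊆ s.erase a := fun u hu =>
    mem_erase.2 ⟨fun hua => G.notMem_neighborFinset_self a (hua ▸ (mem_inter.1 hu).1),
      (mem_inter.1 hu).2⟩
  have heq := eq_of_subset_of_card_le hsub (by rw [card_erase_of_mem ha]; have := h a ha; omega)
  have hb' : b ∈ s.erase a := mem_erase.2 ⟨Ne.symm hab, hb⟩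
  rw [← heq] at hb'
  exact (G.mem_neighborFinset a b).1 (mem_inter.1 hb').1

variable (G) in
lemma colorable_of_forall_exists_card_neighborFinset_inter_le (c : ℕ)
    (h : ∀ t : Finset V, t.Nonempty → ∃ v ∈ t, #(G.neighborFinset v ∩ t) ≤ c) :
    G.Colorable (c + 1) := by
  suffices ∀ t : Finset V, ∃ f : V → Fin (c + 1),
      ∀ a ∈ t, ∀ b ∈ t, G.Adj a b → f a ≠ f b by
    obtain ⟨f, hf⟩ := this univ
    exact ⟨Coloring.mk f fun hab => hf _ (mem_univ _) _ (mem_univ _) hab⟩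
  intro t
  induction t using Finset.strongInduction with
  | H t ih =>
  rcases t.eq_empty_or_nonempty with rfl | ht
  · exact ⟨0, by simp⟩
  obtain ⟨v, hvt, hv⟩ := h t ht
  obtain ⟨f, hf⟩ := ih (t.erase v) (erase_ssubset hvt)
  obtain ⟨x, -, hx⟩ := exists_mem_notMem_of_card_lt_card
    (s := (G.neighborFinset v ∩ t).image f) (t := univ)
    (by simpa using card_image_le.trans_lt (Nat.lt_succ_of_le hv))
  have hnew : ∀ a ∈ t, G.Adj v a → x ≠ f a := fun a ha hva hxa =>
    hx (mem_image.2 ⟨a, mem_inter.2 ⟨(G.mem_neighborFinset v a).2 hva, ha⟩, hxa.symm⟩)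
  refine ⟨Function.update f v x, fun a ha b hb hab => ?_⟩
  by_cases hav : a = v
  · subst hav
    rw [Function.update_self, Function.update_of_ne (G.ne_of_adj hab).symm]
    exact hnew b hb hab
  by_cases hbv : b = v
  · subst hbv
    rw [Function.update_self, Function.update_of_ne hav]
    exact (hnew a ha hab.symm).symm
  rw [Function.update_of_ne hav, Function.update_of_ne hbv]
  exact hf a (mem_erase.2 ⟨hav, ha⟩) b (mem_erase.2 ⟨hbv, hb⟩) hab

lemma sum_degree_eq_sum_card_neighborFinset_inter (S : Finset V) :
    ∑ v ∈ S, G.degree v =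
      ∑ v ∈ S, #(G.neighborFinset v ∩ S) + ∑ u ∈ Sᶜ, #(G.neighborFinset u ∩ S) := by
  have hcross :
      ∑ v ∈ S, #(G.neighborFinset v \ S) = ∑ u ∈ Sᶜ, #(G.neighborFinset u ∩ S) := by
    convert sum_card_bipartiteAbove_eq_sum_card_bipartiteBelow (r := G.Adj) (s := S) (t := Sᶜ)
      using 3 <;> ext <;> simp [bipartiteAbove, bipartiteBelow, and_comm, G.adj_comm]
  rw [← hcross, ← sum_add_distrib]
  exact sum_congr rfl fun v _ => (card_inter_add_card_sdiff _ _).symm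

lemma two_mul_card_edgeFinset_eq (S : Finset V) :
    2 * #G.edgeFinset = ∑ v ∈ S, #(G.neighborFinset v ∩ S) +
      ∑ u ∈ Sᶜ, #(G.neighborFinset u ∩ S) + ∑ u ∈ Sᶜ, G.degree u := by
  rw [← sum_degrees_eq_twice_card_edges, ← sum_add_sum_compl S,
    sum_degree_eq_sum_card_neighborFinset_inter]

lemma two_mul_card_edgeFinset_le (S : Finset V) :
    2 * #G.edgeFinset ≤ #S * (#S - 1) + 2 * ∑ u ∈ Sᶜ, G.degree u := by
  have hS : ∑ v ∈ S, #(G.neighborFinset v ∩ S) ≤ ∑ _v ∈ S, (#S - 1) :=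
    sum_le_sum fun _ hv => Nat.le_sub_one_of_lt (card_neighborFinset_inter_lt hv)
  have hSc := sum_le_sum fun u (_ : u ∈ Sᶜ) => card_neighborFinset_inter_le_degree (G := G) S u
  rw [sum_const, smul_eq_mul] at hS
  rw [two_mul_card_edgeFinset_eq S]
  omega

lemma isClique_and_neighborFinset_subset_of_two_mul_card_edgeFinset_eq {S : Finset V}
    (h : 2 * #G.edgeFinset = #S * (#S - 1) + 2 * ∑ u ∈ Sᶜ, G.degree u) :
    G.IsClique (S : Set V) ∧ ∀ u ∉ S, G.neighborFinset u ⊆ S := by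
  have hS_le : ∀ v ∈ S, #(G.neighborFinset v ∩ S) ≤ #S - 1 :=
    fun _ hv => Nat.le_sub_one_of_lt (card_neighborFinset_inter_lt hv)
  have hSc_le : ∀ u ∈ Sᶜ, #(G.neighborFinset u ∩ S) ≤ G.degree u :=
    fun u _ => card_neighborFinset_inter_le_degree S u
  have hS_sum : ∑ v ∈ S, #(G.neighborFinset v ∩ S) ≤ ∑ _v ∈ S, (#S - 1) :=
    sum_le_sum hS_le
  have hSc_sum : ∑ u ∈ Sᶜ, #(G.neighborFinset u ∩ S) ≤ ∑ u ∈ Sᶜ, G.degree u :=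
    sum_le_sum hSc_le
  rw [two_mul_card_edgeFinset_eq S] at h
  rw [sum_const, smul_eq_mul] at hS_sum
  have hS_eq : ∀ v ∈ S, #(G.neighborFinset v ∩ S) = #S - 1 := by
    rw [← sum_eq_sum_iff_of_le hS_le, sum_const, smul_eq_mul]
    omega
  have hSc_eq : ∀ u ∈ Sᶜ, #(G.neighborFinset u ∩ S) = G.degree u := by
    rw [← sum_eq_sum_iff_of_le hSc_le]
    omega
  refine ⟨isClique_of_forall_card_le_card_neighborFinset_inter_add_one fun v hv => ?_,
    fun u hu => ?_⟩
  · have := hS_eq v hv; have := card_neighborFinset_inter_lt (G := G) hv; omega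
  · rw [← inter_eq_left]
    exact eq_of_subset_of_card_le inter_subset_left
      ((hSc_eq u (mem_compl.2 hu)).trans (card_neighborFinset_eq_degree G u).symm).ge

end Graph

namespace GaplessDegrees

variable {V : Type*} [Fintype V] [DecidableEq V] {G : SimpleGraph V} [DecidableRel G.Adj]

lemma exists_finset_degree_lt (hG : GaplessDegrees G) {m : ℕ} {v : V} (hv : m ≤ G.degree v) :
    ∃ W : Finset V, #W = m - 1 ∧ (∀ w ∈ W, G.degree w < m) ∧
      2 * ∑ w ∈ W, G.degree w = m * (m - 1) := by
  have hw : ∀ j ∈ Ico 1 m, ∃ w, G.degree w = j := fun j hj =>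
    hG (mem_Ico.1 hj).1 (v := v) (by have := (mem_Ico.1 hj).2; omega)
  have : Nonempty V := ⟨v⟩
  choose! w hw using hw
  have hinj : Set.InjOn w (Ico 1 m) := fun i hi j hj hij => by rw [← hw i hi, ← hw j hj, hij]
  refine ⟨(Ico 1 m).image w, by rw [card_image_of_injOn hinj, Nat.card_Ico], ?_, ?_⟩
  · simp only [mem_image]
    rintro _ ⟨j, hj, rfl⟩
    exact (hw j hj).trans_lt (mem_Ico.1 hj).2
  · rw [sum_image hinj, sum_congr rfl hw]
    rcases Nat.eq_zero_or_pos m with rfl | hm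
    · simp
    rw [mul_comm, ← sum_range_id_mul_two, sum_range_eq_add_Ico _ hm, zero_add]

/-- The paper's `d_i ≤ n + 1 - i` for the `i`-th largest degree `d_i`. -/
lemma card_le_degree_add_le (hG : GaplessDegrees G) {m : ℕ} {v : V} (hv : m ≤ G.degree v) :
    #{w | m ≤ G.degree w} + m ≤ Fintype.card V + 1 := by
  obtain ⟨W, hWcard, hW, -⟩ := hG.exists_finset_degree_lt hv
  have hdisj : Disjoint ({w | m ≤ G.degree w} : Finset V) W :=
    disjoint_right.2 fun w hw hw' => by have := hW w hw; have := (mem_filter.1 hw').2; omega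
  have := card_le_univ (({w | m ≤ G.degree w} : Finset V) ∪ W)
  rw [card_union_of_disjoint hdisj] at this
  omega

theorem colorable (hG : GaplessDegrees G) : G.Colorable (Fintype.card V / 2 + 1) := by
  refine colorable_of_forall_exists_card_neighborFinset_inter_le G _ fun t ht => ?_
  obtain ⟨v, hvt, hmin⟩ := t.exists_min_image (fun w => G.degree w) ht
  refine ⟨v, hvt, ?_⟩
  have hdeg := card_neighborFinset_inter_le_degree (G := G) t v
  have ht_lt := card_neighborFinset_inter_lt (G := G) hvt
  have hsub : t ⊆ ({w | G.degree v ≤ G.degree w} : Finset V) := fun w hw => by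
    simpa using hmin w hw
  have := card_le_card hsub
  have := hG.card_le_degree_add_le (le_refl (G.degree v))
  omega

variable {S : Finset V}

lemma two_mul_sum_degree_compl_le (hG : GaplessDegrees G) (hS_ge : ∀ v ∈ S, #S ≤ G.degree v)
    (hS_le : ∀ v ∉ S, G.degree v ≤ #S) (hS : S.Nonempty) :
    #S * (#S - 1) + 2 * ∑ u ∈ Sᶜ, G.degree u ≤ 2 * (#S * (Fintype.card V - #S)) ∧
      (#S * (#S - 1) + 2 * ∑ u ∈ Sᶜ, G.degree u = 2 * (#S * (Fintype.card V - #S)) →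
        2 * #S ≤ Fintype.card V → ∃ u ∉ S, G.degree u = #S) := by
  obtain ⟨v, hv⟩ := hS
  obtain ⟨W, hWcard, hW, hWsum⟩ := hG.exists_finset_degree_lt (hS_ge v hv)
  have hWS : W ⊆ Sᶜ := fun w hw => mem_compl.2 fun hwS => (hS_ge w hwS).not_gt (hW w hw)
  set R := Sᶜ \ W
  have hRcard : #R + (#S - 1) = Fintype.card V - #S := by
    have := card_le_card hWS
    rw [card_sdiff_of_subset hWS, card_compl] at *
    omega
  have hR_le : ∀ u ∈ R, G.degree u ≤ #S :=
    fun u hu => hS_le u (mem_compl.1 (mem_sdiff.1 hu).1)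
  have hRsum : ∑ u ∈ R, G.degree u ≤ ∑ _u ∈ R, #S := sum_le_sum hR_le
  rw [sum_const, smul_eq_mul] at hRsum
  have hsplit : ∑ u ∈ Sᶜ, G.degree u = ∑ u ∈ R, G.degree u + ∑ u ∈ W, G.degree u :=
    (sum_sdiff hWS).symm
  have hkey : 2 * (#S * (Fintype.card V - #S)) = 2 * (#S * (#S - 1)) + 2 * (#R * #S) := by
    rw [← hRcard]; ring
  refine ⟨by omega, fun heq h2S => ?_⟩
  have hR_eq := (sum_eq_sum_iff_of_le hR_le).1 (by rw [sum_const, smul_eq_mul]; omega)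
  have hk : 0 < #S := card_pos.2 ⟨v, hv⟩
  obtain ⟨u, hu⟩ : R.Nonempty := card_pos.1 (by omega)
  exact ⟨u, mem_compl.1 (mem_sdiff.1 hu).1, hR_eq u hu⟩

theorem card_edgeFinset_le (hG : GaplessDegrees G) (hS_ge : ∀ v ∈ S, #S ≤ G.degree v)
    (hS_le : ∀ v ∉ S, G.degree v ≤ #S) (hS : S.Nonempty) :
    #G.edgeFinset ≤ Fintype.card V ^ 2 / 4 := by
  have := two_mul_card_edgeFinset_le (G := G) S
  have := (hG.two_mul_sum_degree_compl_le hS_ge hS_le hS).1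
  have := Nat.mul_sub_le_sq_div_four #S (Fintype.card V)
  omega

theorem exists_isNClique_of_card_edgeFinset_eq (hG : GaplessDegrees G)
    (hS_ge : ∀ v ∈ S, #S ≤ G.degree v) (hS_le : ∀ v ∉ S, G.degree v ≤ #S)
    (hS : S.Nonempty) (he : #G.edgeFinset = Fintype.card V ^ 2 / 4) :
    ∃ s : Finset V, G.IsNClique (Fintype.card V / 2 + 1) s := by
  have hE := two_mul_card_edgeFinset_le (G := G) S
  obtain ⟨hle, hsplit⟩ := hG.two_mul_sum_degree_compl_le hS_ge hS_le hS
  have hmax := Nat.mul_sub_le_sq_div_four #S (Fintype.card V)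
  have htight : 2 * #G.edgeFinset = #S * (#S - 1) + 2 * ∑ u ∈ Sᶜ, G.degree u := by omega
  obtain ⟨hclique, hsub⟩ :=
    isClique_and_neighborFinset_subset_of_two_mul_card_edgeFinset_eq htight
  have hn := Nat.le_two_mul_add_one_of_mul_sub_eq (k := #S) (n := Fintype.card V) (by omega)
  by_cases hbig : Fintype.card V / 2 + 1 ≤ #S
  · obtain ⟨s, hsS, hs⟩ := exists_subset_card_eq hbig
    exact ⟨s, hclique.subset (by simpa using hsS), hs⟩
  obtain ⟨u, huS, hu⟩ := hsplit (by omega) (by omega)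
  have hNu : G.neighborFinset u = S :=
    eq_of_subset_of_card_le (hsub u huS) (by rw [card_neighborFinset_eq_degree, hu])
  refine ⟨insert u S, ?_, by rw [card_insert_of_notMem huS]; omega⟩
  rw [coe_insert]
  exact hclique.insert fun b hb _ => (G.mem_neighborFinset u b).1 (hNu ▸ hb)

end GaplessDegrees

theorem stmt19 {V : Type*} [Fintype V] (G : SimpleGraph V) [DecidableRel G.Adj]
    (hG : GlobalAmoeba G)
    (hδ : (∃ v : V, G.degree v = 1) ∧ ∀ v : V, 1 ≤ G.degree v) :
    G.edgeFinset.card ≤ Fintype.card V ^ 2 / 4 ∧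
    G.cliqueNum ≤ Fintype.card V / 2 + 1 ∧
    G.chromaticNumber ≤ (Fintype.card V / 2 + 1 : ℕ) ∧
    (G.edgeFinset.card = Fintype.card V ^ 2 / 4 →
      G.cliqueNum = Fintype.card V / 2 + 1 ∧
      G.chromaticNumber = (Fintype.card V / 2 + 1 : ℕ)) := by
  classical
  have hgap := hG.gaplessDegrees
  have hχ : G.chromaticNumber ≤ (Fintype.card V / 2 + 1 : ℕ) :=
    hgap.colorable.chromaticNumber_le
  have hω : G.cliqueNum ≤ Fintype.card V / 2 + 1 := by
    exact_mod_cast G.cliqueNum_le_chromaticNumber.trans hχ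
  obtain ⟨S, hS_ge, hS_le⟩ := exists_durfee_finset fun v => G.degree v
  have hS : S.Nonempty := by
    obtain ⟨v, hv⟩ := hδ.1
    by_cases hvS : v ∈ S
    · exact ⟨v, hvS⟩
    · exact card_pos.1 (by have := hS_le v hvS; omega)
  refine ⟨hgap.card_edgeFinset_le hS_ge hS_le hS, hω, hχ, fun he => ?_⟩
  obtain ⟨s, hs⟩ := hgap.exists_isNClique_of_card_edgeFinset_eq hS_ge hS_le hS he
  exact ⟨hω.antisymm (hs.card_eq ▸ hs.isClique.card_le_cliqueNum),
    hχ.antisymm (hs.card_eq ▸ hs.isClique.card_le_chromaticNumber)⟩
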